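/- Let f : ℝ^n → ℝ^C be a classifier, let g : ℝ → ℝ be monotonically increasing, and let I : ℝ^n × {1,…,C} → ℝ^u be an interpreter satisfying the generalized completeness axiom: for all inputs x and classes c, Σ_{i=1}^{u} [I(x,c)]_i = g(f_c(x)). Suppose x is predicted as class y and x′ is predicted as class y′ ≠ y (in particular f_{y′}(x′) ≥ f_y(x′)). Then (1/2)(‖I(x,y) − I(x′,y)‖₁ + ‖I(x,y′) − I(x′,y′)‖₁) ≥ (1/2)(g(f_y(x)) − g(f_{y′}(x))). -/

import Mathlib

/-! Completeness turns the score gap `g (f x c) - g (f x' c)` into a difference of sums of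
attributions, bounded by their `ℓ₁` distance. Chaining the class-`y` gap from `x` to `x'`, the
inequality `g (f x' y) ≤ g (f x' y')` coming from the prediction at `x'`, and the class-`y'` gap
back from `x'` to `x` bounds `g (f x y) - g (f x y')` by the sum of the two distances. -/

open Finset

theorem abs_sum_sub_sum_le_sum_abs_sub {ι G : Type*} [AddCommGroup G] [LinearOrder G]
    [IsOrderedAddMonoid G] (s : Finset ι) (a b : ι → G) :
    |∑ i ∈ s, a i - ∑ i ∈ s, b i| ≤ ∑ i ∈ s, |a i - b i| := by
  rw [← sum_sub_distrib]
  exact abs_sum_le_sum_abs _ _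

theorem abs_sub_le_sum_abs_sub_of_completeness {X K ι : Type*} [Fintype ι]
    {f : X → K → ℝ} {g : ℝ → ℝ} {I : X → K → ι → ℝ}
    (hcomp : ∀ x c, ∑ i, I x c i = g (f x c)) (x x' : X) (c : K) :
    |g (f x c) - g (f x' c)| ≤ ∑ i, |I x c i - I x' c i| := by
  rw [← hcomp, ← hcomp]
  exact abs_sum_sub_sum_le_sum_abs_sub _ _ _

theorem l1_two_class_discrepancy_lower_bound_general_general
    (n C u : ℕ)
    (f : (Fin n → ℝ) → Fin C → ℝ)
    (g : ℝ → ℝ) (hg : Monotone g)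
    (I : (Fin n → ℝ) → Fin C → Fin u → ℝ)
    (hcomp : ∀ x c, ∑ i, I x c i = g (f x c))
    (x x' : Fin n → ℝ) (y y' : Fin C)
    (hy' : ∀ j, f x' j ≤ f x' y') :
    (1 / 2) * (g (f x y) - g (f x y')) ≤
      (1 / 2) * ((∑ i, |I x y i - I x' y i|) + (∑ i, |I x y' i - I x' y' i|)) := by
  have gap_y := abs_le.1 (abs_sub_le_sum_abs_sub_of_completeness hcomp x x' y)
  have gap_y' := abs_le.1 (abs_sub_le_sum_abs_sub_of_completeness hcomp x x' y')
  have pred_x' : g (f x' y) ≤ g (f x' y') := hg (hy' y)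
  linarith [gap_y.2, gap_y'.1]

/-- **Proposition 1 (generalized completeness axiom).**
If the interpreter `I` satisfies `∑ i, [I(x,c)]ᵢ = g(f_c(x))` for a
monotonically increasing `g`, `x` is predicted as class `y` and `x'` is
predicted as class `y' ≠ y`, then
`(1/2)(‖I(x,y) − I(x',y)‖₁ + ‖I(x,y') − I(x',y')‖₁) ≥ (1/2)(g(f_y(x)) − g(f_{y'}(x)))`. -/
theorem l1_two_class_discrepancy_lower_bound_general
    (n C u : ℕ)
    (f : (Fin n → ℝ) → Fin C → ℝ)
    (g : ℝ → ℝ) (hg : Monotone g)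
    (I : (Fin n → ℝ) → Fin C → Fin u → ℝ)
    (hcomp : ∀ x c, ∑ i, I x c i = g (f x c))
    (x x' : Fin n → ℝ) (y y' : Fin C)
    (hy : ∀ j, f x j ≤ f x y)
    (hy' : ∀ j, f x' j ≤ f x' y')
    (hne : y' ≠ y) :
    (1 / 2) * (g (f x y) - g (f x y')) ≤
      (1 / 2) * ((∑ i, |I x y i - I x' y i|) + (∑ i, |I x y' i - I x' y' i|)) :=
  l1_two_class_discrepancy_lower_bound_general_general n C u f g hg I hcomp x x' y y' hy'
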